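/- arXiv:1406.1377 — 3 statements merged into one kernel-verified Lean document; each statement's English description precedes it below -/
import Mathlib

section
/- Under the hypotheses C_V, C_L > 0, γ_V, γ_L > 1, π_L > 0, p* > 0, T* > 0, and (q_V − q_L)/T* > C_L γ_L, the saturation-curve slope T_sat′(p*) = T* · (C_V(γ_V−1)/p* − C_L(γ_L−1)/(p*+π_L)) / (C_Vγ_V − C_Lγ_L + (q_V−q_L)/T*) satisfies T_sat′(p*) < (T*/p*)·(γ_V−1)/γ_V. -/
theorem sub_div_add_lt_div {𝕜 : Type*} [Field 𝕜] [LinearOrder 𝕜] [IsStrictOrderedRing 𝕜]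
    {A B c d : 𝕜} (hA : 0 < A) (hB : 0 ≤ B) (hc : 0 < c) (hd : 0 < d) :
    (A - B) / (c + d) < A / c :=
  div_lt_div₀' (by linarith) (by linarith) hA hc

/-- Under the stated parameter hypotheses, the saturation-curve slope
T_sat′(p*) is strictly less than (T*/p*)·(γ_V−1)/γ_V. -/
theorem saturation_slope_lt_shock_slope
    (γV γL CV CL πL pstar Tstar qV qL : ℝ)
    (hCV : 0 < CV) (hCL : 0 < CL) (hγV : 1 < γV) (hγL : 1 < γL)
    (hπL : 0 < πL) (hp : 0 < pstar) (hT : 0 < Tstar)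
    (hq : CL * γL < (qV - qL) / Tstar) :
    Tstar * ((CV * (γV - 1) / pstar - CL * (γL - 1) / (pstar + πL)) /
        (CV * γV - CL * γL + (qV - qL) / Tstar))
      < Tstar / pstar * ((γV - 1) / γV) := by
  have hγV' := sub_pos.2 hγV
  have hγL' := sub_pos.2 hγL
  have hquot := sub_div_add_lt_div (A := CV * (γV - 1) / pstar) (B := CL * (γL - 1) / (pstar + πL))
    (by positivity) (by positivity) (by positivity : 0 < CV * γV) (sub_pos.2 hq)
  calc Tstar * ((CV * (γV - 1) / pstar - CL * (γL - 1) / (pstar + πL)) /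
        (CV * γV - CL * γL + (qV - qL) / Tstar))
      = Tstar * ((CV * (γV - 1) / pstar - CL * (γL - 1) / (pstar + πL)) /
        (CV * γV + ((qV - qL) / Tstar - CL * γL))) := by ring_nf
    _ < Tstar * (CV * (γV - 1) / pstar / (CV * γV)) := mul_lt_mul_of_pos_left hquot hT
    _ = Tstar / pstar * ((γV - 1) / γV) := by field_simp
end

section
/- Theorem (no condensation by compression, stiffened gas): Assume the parameter conditions C_V, C_L > 0, γ_V, γ_L > 1, π_L > 0, and for the intersection point (p*, T*) with p*, T* > 0 assume (q_V − q_L)/T* − C_Lγ_L > 0. Then the shock wave curve T̂(p̂) = T*·(p̂/p*)·(p*(γ_V+1)+p̂(γ_V−1))/(p̂(γ_V+1)+p*(γ_V−1)) satisfies T̂′(p*) > T_sat′(p*), where T_sat′(p*) = T*·(C_V(γ_V−1)/p* − C_L(γ_L−1)/(p*+π_L))/(C_Vγ_V − C_Lγ_L + (q_V−q_L)/T*). Hence the necessary intersection condition T̂′(p*) ≤ T_sat′(p*) fails. -/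
/-!
At `p*` the shock wave curve has slope `(T*/p*)(γ_V - 1)/γ_V`. In the saturation slope the
liquid term `C_L(γ_L - 1)/(p* + π_L)` only lowers the numerator, while the latent heat makes the
denominator exceed `C_V γ_V`; so the saturation slope is below
`T* · (C_V(γ_V - 1)/p*) / (C_V γ_V)`, which is exactly the slope of the shock wave curve.
-/

noncomputable section

/-- The shock wave curve `T̂(p)` through `(p₀, T₀)` of a stiffened gas with adiabatic exponent `γ`. -/
def shockTemperature (γ p₀ T₀ p : ℝ) : ℝ :=
  T₀ * (p / p₀) * ((p₀ * (γ + 1) + p * (γ - 1)) / (p * (γ + 1) + p₀ * (γ - 1)))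

/-- The slope `T_sat′(p)` of the saturation curve at `(p, T)`, from the implicit function theorem
applied to `g_V = g_L`. -/
def saturationSlope (γV γL CV CL πL qV qL p T : ℝ) : ℝ :=
  T * ((CV * (γV - 1) / p - CL * (γL - 1) / (p + πL)) / (CV * γV - CL * γL + (qV - qL) / T))

theorem hasDerivAt_shockTemperature {γ p₀ : ℝ} (T₀ : ℝ) (hp₀ : p₀ ≠ 0) (hγ : γ ≠ 0) :
    HasDerivAt (shockTemperature γ p₀ T₀) (T₀ / p₀ * ((γ - 1) / γ)) p₀ := by
  have hsum : p₀ * (γ + 1) + p₀ * (γ - 1) = 2 * γ * p₀ := by ring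
  have hden : p₀ * (γ + 1) + p₀ * (γ - 1) ≠ 0 := by
    rw [hsum]
    positivity
  have hlin : HasDerivAt (fun p : ℝ => T₀ * (p / p₀)) (T₀ * (1 / p₀)) p₀ :=
    ((hasDerivAt_id p₀).div_const p₀).const_mul T₀
  have hnum : HasDerivAt (fun p : ℝ => p₀ * (γ + 1) + p * (γ - 1)) (γ - 1) p₀ := by
    simpa using ((hasDerivAt_id p₀).mul_const (γ - 1)).const_add (p₀ * (γ + 1))
  have hdenom : HasDerivAt (fun p : ℝ => p * (γ + 1) + p₀ * (γ - 1)) (γ + 1) p₀ := by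
    simpa using ((hasDerivAt_id p₀).mul_const (γ + 1)).add_const (p₀ * (γ - 1))
  refine (hlin.mul (hnum.div hdenom hden)).congr_deriv ?_
  simp only [Pi.div_apply]
  rw [div_self hden, div_self hp₀, hsum]
  field_simp
  ring

theorem saturationSlope_lt {γV γL CV CL πL qV qL p T : ℝ}
    (hCV : 0 ≤ CV) (hCL : 0 ≤ CL) (hγV : 1 < γV) (hγL : 1 ≤ γL) (hπL : 0 ≤ πL) (hp : 0 < p)
    (hT : 0 < T) (hq : 0 < (qV - qL) / T - CL * γL) :
    saturationSlope γV γL CV CL πL qV qL p T < T / p * ((γV - 1) / γV) := by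
  have hγV0 : 0 < γV := by linarith
  have hliquid : 0 ≤ CL * (γL - 1) / (p + πL) := by
    have : 0 ≤ γL - 1 := sub_nonneg.2 hγL
    positivity
  have hvapour : CV * γV < CV * γV - CL * γL + (qV - qL) / T := by linarith
  have hslope : 0 < (γV - 1) / (p * γV) := div_pos (by linarith) (by positivity)
  have hvapour_term : CV * (γV - 1) / p = (γV - 1) / (p * γV) * (CV * γV) := by
    field_simp
  have hratio : (CV * (γV - 1) / p - CL * (γL - 1) / (p + πL)) /
      (CV * γV - CL * γL + (qV - qL) / T) < (γV - 1) / (p * γV) := by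
    rw [div_lt_iff₀ ((by positivity : 0 ≤ CV * γV).trans_lt hvapour)]
    calc CV * (γV - 1) / p - CL * (γL - 1) / (p + πL)
        ≤ (γV - 1) / (p * γV) * (CV * γV) := by linarith
      _ < (γV - 1) / (p * γV) * (CV * γV - CL * γL + (qV - qL) / T) :=
          mul_lt_mul_of_pos_left hvapour hslope
  calc saturationSlope γV γL CV CL πL qV qL p T < T * ((γV - 1) / (p * γV)) :=
        mul_lt_mul_of_pos_left hratio hT
    _ = T / p * ((γV - 1) / γV) := by field_simp

end

/-- no condensation by compression, stiffened gas: under the stated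
parameter hypotheses, the derivative at p* of the shock wave curve
T̂(p̂) = T*·(p̂/p*)·(p*(γ_V+1)+p̂(γ_V−1))/(p̂(γ_V+1)+p*(γ_V−1))
is strictly greater than the saturation slope T_sat′(p*); hence the necessary
intersection condition T̂′(p*) ≤ T_sat′(p*) fails. -/
theorem no_condensation_by_compression
    (γV γL CV CL πL pstar Tstar qV qL : ℝ)
    (hCV : 0 < CV) (hCL : 0 < CL) (hγV : 1 < γV) (hγL : 1 < γL)
    (hπL : 0 < πL) (hp : 0 < pstar) (hT : 0 < Tstar)
    (hq : 0 < (qV - qL) / Tstar - CL * γL) :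
    deriv
        (fun phat : ℝ =>
          Tstar * (phat / pstar) *
            ((pstar * (γV + 1) + phat * (γV - 1)) /
              (phat * (γV + 1) + pstar * (γV - 1)))) pstar
      > Tstar * ((CV * (γV - 1) / pstar - CL * (γL - 1) / (pstar + πL)) /
          (CV * γV - CL * γL + (qV - qL) / Tstar)) := by
  have hshock := hasDerivAt_shockTemperature Tstar hp.ne' (by positivity : γV ≠ 0)
  exact lt_of_lt_of_eq (saturationSlope_lt hCV.le hCL.le hγV hγL.le hπL.le hp hT hq) hshock.deriv.symm
end

section
/- Theorem (no strong cavitation, stiffened gas): Under the same parameter hypotheses (C_V, C_L > 0, γ_V, γ_L > 1, π_L > 0, p*, T* > 0, (q_V − q_L)/T* − C_Lγ_L > 0), the isentropic wave curve T̂(p) = T*(p/p*)^((γ_V−1)/γ_V) satisfies T̂′(p*) > T_sat′(p*), so a rarefaction wave curve cannot cross the saturation line from the vapor side in the required direction. -/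
/-!
Both slopes are `T*` times a quotient. The isentrope has slope `T* · α / p*` with
`α = (γ_V - 1)/γ_V`, and `α / p* · C_V γ_V = C_V (γ_V - 1)/p*` is the vapor term of the
saturation numerator. Since the liquid term is subtracted and nonnegative, while the saturation
denominator exceeds `C_V γ_V` by the positive quantity `(q_V - q_L)/T* - C_L γ_L`, the saturation
quotient is strictly smaller than `α / p*`.
-/

theorem hasDerivAt_mul_div_rpow_self {p₀ : ℝ} (hp₀ : p₀ ≠ 0) (T a : ℝ) :
    HasDerivAt (fun p : ℝ => T * (p / p₀) ^ a) (T * (a / p₀)) p₀ := by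
  have hratio : HasDerivAt (fun p : ℝ => p / p₀) (1 / p₀) p₀ := (hasDerivAt_id p₀).div_const p₀
  have hpow := (hratio.rpow_const (p := a) (Or.inl (by simp [hp₀]))).const_mul T
  rwa [div_self hp₀, Real.one_rpow, mul_one, one_div_mul_eq_div] at hpow

theorem div_lt_of_le_mul_of_lt {a c x y : ℝ} (hc : 0 < c) (hx : 0 < x) (hxy : x < y)
    (ha : a ≤ c * x) : a / y < c := by
  rw [div_lt_iff₀ (hx.trans hxy)]
  calc a ≤ c * x := ha
    _ < c * y := mul_lt_mul_of_pos_left hxy hc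

/-- no strong cavitation, stiffened gas: under the same parameter
hypotheses, the derivative at p* of the isentropic wave curve
T̂(p) = T*(p/p*)^((γ_V−1)/γ_V) is strictly greater than the saturation slope
T_sat′(p*). -/
theorem no_strong_cavitation
    (γV γL CV CL πL pstar Tstar qV qL : ℝ)
    (hCV : 0 < CV) (hCL : 0 < CL) (hγV : 1 < γV) (hγL : 1 < γL)
    (hπL : 0 < πL) (hp : 0 < pstar) (hT : 0 < Tstar)
    (hq : 0 < (qV - qL) / Tstar - CL * γL) :
    deriv (fun p : ℝ => Tstar * (p / pstar) ^ ((γV - 1) / γV)) pstar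
      > Tstar * ((CV * (γV - 1) / pstar - CL * (γL - 1) / (pstar + πL)) /
          (CV * γV - CL * γL + (qV - qL) / Tstar)) := by
  have hγV₀ : 0 < γV := by linarith
  have hliquid : 0 ≤ CL * (γL - 1) / (pstar + πL) :=
    div_nonneg (mul_nonneg hCL.le (by linarith)) (by linarith)
  have hvapor : (γV - 1) / γV / pstar * (CV * γV) = CV * (γV - 1) / pstar := by
    field_simp
  rw [(hasDerivAt_mul_div_rpow_self hp.ne' _ _).deriv, gt_iff_lt]
  refine mul_lt_mul_of_pos_left (div_lt_of_le_mul_of_lt ?_ (mul_pos hCV hγV₀) ?_ ?_) hT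
  · exact div_pos (div_pos (by linarith) hγV₀) hp
  · linarith
  · linarith
end
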